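/- If a selector errs on exactly k of N images and on error images it may pick the worst algorithm, then the worst-case average score of such a selector equals (1/N)(∑_i max_j f i j) − (1/N) · (sum of the k largest values of (max_j f i j − min_j f i j) over images i). In particular, the worst-case average score over all selectors with at most k errors is achieved by choosing the worst algorithm on the k images with the largest spread max_j f i j − min_j f i j. -/
import Mathlib

open Classical in
private lemma aux6 (N m : ℕ) (hN : 0 < N) (f : Fin N → Fin m → ℝ) (g h : Fin N → ℝ)
    (hgle : ∀ i j, f i j ≤ g i) (hge : ∀ i, ∃ j, f i j = g i)
    (hle : ∀ i j, h i ≤ f i j) (hhe : ∀ i, ∃ j, f i j = h i) (k : ℕ) :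
    sInf {a : ℝ | ∃ S : Fin N → Fin m,
        (Finset.univ.filter (fun i : Fin N => f i (S i) < g i)).card ≤ k ∧
        a = (1 / (N : ℝ)) * ∑ i : Fin N, f i (S i)} =
      (1 / (N : ℝ)) * (∑ i : Fin N, g i) -
      (1 / (N : ℝ)) * sSup {s : ℝ | ∃ E : Finset (Fin N), E.card ≤ k ∧
        s = ∑ i ∈ E, (g i - h i)} := by
  set D : Set ℝ := {s : ℝ | ∃ E : Finset (Fin N), E.card ≤ k ∧
      s = ∑ i ∈ E, (g i - h i)} with hD
  set A : Set ℝ := {a : ℝ | ∃ S : Fin N → Fin m,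
      (Finset.univ.filter (fun i : Fin N => f i (S i) < g i)).card ≤ k ∧
      a = (1 / (N : ℝ)) * ∑ i : Fin N, f i (S i)} with hA
  have hN0 : (0:ℝ) ≤ 1 / N := by positivity
  have hDfin : D.Finite := by
    apply Set.Finite.subset
      (Set.Finite.image (fun E : Finset (Fin N) => ∑ i ∈ E, (g i - h i)) Set.finite_univ)
    rintro s ⟨E, _, rfl⟩
    exact ⟨E, trivial, rfl⟩
  have hDne : D.Nonempty := ⟨0, ∅, by simp, by simp⟩
  have hDbdd : BddAbove D := hDfin.bddAbove
  obtain ⟨E, hEk, hEs⟩ := hDne.csSup_mem hDfin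
  choose jmax hjmax using hge
  choose jmin hjmin using hhe
  set S0 : Fin N → Fin m := fun i => if i ∈ E then jmin i else jmax i with hS0
  have hsub : Finset.univ.filter (fun i : Fin N => f i (S0 i) < g i) ⊆ E := by
    intro i hi
    simp only [Finset.mem_filter] at hi
    by_contra hiE
    have hs : S0 i = jmax i := if_neg hiE
    rw [hs, hjmax] at hi
    exact lt_irrefl _ hi.2
  have hval : ∑ i : Fin N, f i (S0 i) = (∑ i : Fin N, g i) - ∑ i ∈ E, (g i - h i) := by
    have hpt : ∀ i, f i (S0 i) = g i - (if i ∈ E then g i - h i else 0) := by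
      intro i
      by_cases hiE : i ∈ E
      · simp [hS0, hiE, hjmin i, sub_sub_cancel]
      · simp [hS0, hiE, hjmax i]
    rw [Finset.sum_congr rfl (fun i _ => hpt i), Finset.sum_sub_distrib]
    congr 1
    rw [Finset.sum_ite_mem, Finset.univ_inter]
  have hmemA : (1 / (N:ℝ)) * ∑ i : Fin N, f i (S0 i) ∈ A :=
    ⟨S0, le_trans (Finset.card_le_card hsub) hEk, rfl⟩
  have hlow : ∀ a ∈ A, (1/(N:ℝ)) * (∑ i : Fin N, g i) - (1/(N:ℝ)) * sSup D ≤ a := by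
    rintro a ⟨S, hcard, rfl⟩
    set E' := Finset.univ.filter (fun i : Fin N => f i (S i) < g i) with hE'
    have h1 : ∑ i ∈ E', (g i - h i) ≤ sSup D := le_csSup hDbdd ⟨E', hcard, rfl⟩
    have h2 : (∑ i : Fin N, g i) - ∑ i ∈ E', (g i - h i) ≤ ∑ i : Fin N, f i (S i) := by
      have hpt : ∀ i, g i - (if i ∈ E' then g i - h i else 0) ≤ f i (S i) := by
        intro i
        by_cases hiE : i ∈ E'
        · simp only [hiE, if_pos]
          have := hle i (S i)
          linarith
        · simp only [hiE, if_neg, not_false_iff, sub_zero]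
          have hnl : ¬ f i (S i) < g i := by
            intro hc
            exact hiE (Finset.mem_filter.mpr ⟨Finset.mem_univ _, hc⟩)
          linarith [not_lt.mp hnl]
      rw [← Finset.univ_inter E', ← Finset.sum_ite_mem, ← Finset.sum_sub_distrib]
      exact Finset.sum_le_sum (fun i _ => hpt i)
    nlinarith [mul_nonneg hN0 (sub_nonneg.mpr h1), mul_nonneg hN0 (sub_nonneg.mpr h2)]
  apply le_antisymm
  · have hle1 := csInf_le ⟨_, hlow⟩ hmemA
    rw [hval] at hle1
    calc sInf A ≤ (1/(N:ℝ)) * ((∑ i : Fin N, g i) - ∑ i ∈ E, (g i - h i)) := hle1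
      _ = (1/(N:ℝ)) * (∑ i : Fin N, g i) - (1/(N:ℝ)) * sSup D := by rw [hEs]; ring
  · exact le_csInf ⟨_, hmemA⟩ hlow

open Classical in
theorem stmt_6 (N m : ℕ) (hN : 0 < N) (hm : 0 < m) (f : Fin N → Fin m → ℝ) (k : ℕ) :
    sInf {a : ℝ | ∃ S : Fin N → Fin m,
        (Finset.univ.filter (fun i : Fin N =>
          f i (S i) < Finset.univ.sup' ⟨⟨0, hm⟩, Finset.mem_univ _⟩
            (fun j : Fin m => f i j))).card ≤ k ∧
        a = (1 / (N : ℝ)) * ∑ i : Fin N, f i (S i)} =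
      (1 / (N : ℝ)) * (∑ i : Fin N,
        Finset.univ.sup' ⟨⟨0, hm⟩, Finset.mem_univ _⟩ (fun j : Fin m => f i j)) -
      (1 / (N : ℝ)) * sSup {s : ℝ | ∃ E : Finset (Fin N), E.card ≤ k ∧
        s = ∑ i ∈ E,
          (Finset.univ.sup' ⟨⟨0, hm⟩, Finset.mem_univ _⟩ (fun j : Fin m => f i j) -
           Finset.univ.inf' ⟨⟨0, hm⟩, Finset.mem_univ _⟩ (fun j : Fin m => f i j))} := by
  exact aux6 N m hN f
    (fun i => Finset.univ.sup' ⟨⟨0, hm⟩, Finset.mem_univ _⟩ (fun j : Fin m => f i j))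
    (fun i => Finset.univ.inf' ⟨⟨0, hm⟩, Finset.mem_univ _⟩ (fun j : Fin m => f i j))
    (fun i j => Finset.le_sup' _ (Finset.mem_univ j))
    (fun i => by
      obtain ⟨j, _, hj⟩ := Finset.exists_mem_eq_sup'
        (⟨⟨0, hm⟩, Finset.mem_univ _⟩ : (Finset.univ : Finset (Fin m)).Nonempty)
        (fun j : Fin m => f i j)
      exact ⟨j, hj.symm⟩)
    (fun i j => Finset.inf'_le _ (Finset.mem_univ j))
    (fun i => by
      obtain ⟨j, _, hj⟩ := Finset.exists_mem_eq_inf'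
        (⟨⟨0, hm⟩, Finset.mem_univ _⟩ : (Finset.univ : Finset (Fin m)).Nonempty)
        (fun j : Fin m => f i j)
      exact ⟨j, hj.symm⟩)
    k
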